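/- Suppose F₋ > 2F₊ > 0. If w ≠ 0 lies on the common boundary of regions A₁ and A₂, i.e., w₁ = 0 and w₂ > 0, then the subdifferential of D_sh at w equals the segment [α₁, α₂] = conv{(-F₊, F₊), (2F₊, F₊)}. -/

import Mathlib

noncomputable def d (Fp Fm x : ℝ) : ℝ := Fp * max x 0 - Fm * min x 0

noncomputable def D (Fp Fm : ℝ) (w : ℝ × ℝ) (v : ℝ) : ℝ :=
  d Fp Fm (v - w.1) + d Fp Fm v + d Fp Fm (v + w.2)

noncomputable def Dsh (Fp Fm : ℝ) (w : ℝ × ℝ) : ℝ := ⨅ v : ℝ, D Fp Fm w v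

/-- Standard inner product on ℝ². -/
def dot (x y : ℝ × ℝ) : ℝ := x.1 * y.1 + x.2 * y.2

/-!
For every slope `t ∈ [-F₊, 2F₊]` the linear form `w ↦ t w₁ + F₊ w₂` bounds `D_sh` from below,
since each of the three terms of `D` can be bounded by a supporting line of `d` (slopes `-t`,
`t - F₊`, `F₊`) in such a way that `v` cancels. On the ray `w₁ = 0, w₂ ≥ 0` all these forms touch
`D_sh`, so each `(t, F₊)` is a subgradient there. Conversely, comparing `D_sh` at `w` with its
values at `(0, 2w₂)`, `(0, w₂/2)`, `(w₂, w₂)` and `(-w₂, w₂)`, all attained at explicit `v`,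
forces `ξ₂ = F₊` and `-F₊ ≤ ξ₁ ≤ 2F₊`.
-/

open Set

section

variable {Fp Fm : ℝ}

lemma mul_le_d {c : ℝ} (hc₁ : -Fm ≤ c) (hc₂ : c ≤ Fp) (x : ℝ) : c * x ≤ d Fp Fm x := by
  unfold d
  rcases le_total 0 x with hx | hx
  · rw [max_eq_left hx, min_eq_right hx]
    nlinarith
  · rw [max_eq_right hx, min_eq_left hx]
    nlinarith

lemma d_of_nonneg {x : ℝ} (hx : 0 ≤ x) : d Fp Fm x = Fp * x := by
  simp [d, max_eq_left hx, min_eq_right hx]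

lemma dot_le_D (hm : 2 * Fp ≤ Fm) {t : ℝ} (ht : t ∈ Icc (-Fp) (2 * Fp)) (w : ℝ × ℝ) (v : ℝ) :
    dot (t, Fp) w ≤ D Fp Fm w v := by
  obtain ⟨ht₁, ht₂⟩ := ht
  have h₁ : -t * (v - w.1) ≤ d Fp Fm (v - w.1) := mul_le_d (by linarith) (by linarith) _
  have h₂ : (t - Fp) * v ≤ d Fp Fm v := mul_le_d (by linarith) (by linarith) _
  have h₃ : Fp * (v + w.2) ≤ d Fp Fm (v + w.2) := mul_le_d (by linarith) le_rfl _
  simp only [dot, D]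
  linarith

lemma dot_le_Dsh (hm : 2 * Fp ≤ Fm) {t : ℝ} (ht : t ∈ Icc (-Fp) (2 * Fp)) (w : ℝ × ℝ) :
    dot (t, Fp) w ≤ Dsh Fp Fm w :=
  le_ciInf (dot_le_D hm ht w)

lemma Dsh_le_D (hp : 0 ≤ Fp) (hm : 2 * Fp ≤ Fm) (w : ℝ × ℝ) (v : ℝ) :
    Dsh Fp Fm w ≤ D Fp Fm w v :=
  ciInf_le ⟨dot (0, Fp) w, forall_mem_range.2 (dot_le_D hm ⟨by linarith, by linarith⟩ w)⟩ v

lemma Dsh_eq_of_D_eq (hp : 0 ≤ Fp) (hm : 2 * Fp ≤ Fm) {t : ℝ} (ht : t ∈ Icc (-Fp) (2 * Fp))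
    {w : ℝ × ℝ} {v : ℝ} (h : D Fp Fm w v = dot (t, Fp) w) : Dsh Fp Fm w = dot (t, Fp) w :=
  le_antisymm (h ▸ Dsh_le_D hp hm w v) (dot_le_Dsh hm ht w)

lemma Dsh_zero_left (hp : 0 ≤ Fp) (hm : 2 * Fp ≤ Fm) {s : ℝ} (hs : 0 ≤ s) :
    Dsh Fp Fm (0, s) = Fp * s := by
  have ht : (0 : ℝ) ∈ Icc (-Fp) (2 * Fp) := ⟨by linarith, by linarith⟩
  convert Dsh_eq_of_D_eq hp hm ht (v := 0) ?_ using 1 <;>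
    simp [D, dot, d_of_nonneg hs, d_of_nonneg (le_refl (0 : ℝ))]

lemma Dsh_diag (hp : 0 ≤ Fp) (hm : 2 * Fp ≤ Fm) {s : ℝ} (hs : 0 ≤ s) :
    Dsh Fp Fm (s, s) = 3 * Fp * s := by
  have ht : 2 * Fp ∈ Icc (-Fp) (2 * Fp) := ⟨by linarith, le_rfl⟩
  convert Dsh_eq_of_D_eq hp hm ht (v := s) ?_ using 1
  · simp only [dot]
    ring
  · simp only [D, dot, sub_self, d_of_nonneg hs, d_of_nonneg (le_refl (0 : ℝ)),
      d_of_nonneg (add_nonneg hs hs)]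
    ring

lemma Dsh_antidiag (hp : 0 ≤ Fp) (hm : 2 * Fp ≤ Fm) {s : ℝ} (hs : 0 ≤ s) :
    Dsh Fp Fm (-s, s) = 2 * Fp * s := by
  have ht : -Fp ∈ Icc (-Fp) (2 * Fp) := ⟨le_rfl, by linarith⟩
  convert Dsh_eq_of_D_eq hp hm ht (v := 0) ?_ using 1
  · simp only [dot]
    ring
  · simp only [D, dot, zero_sub, neg_neg, zero_add, d_of_nonneg hs,
      d_of_nonneg (le_refl (0 : ℝ))]
    ring

end

lemma dot_add_dot_sub (ξ w w' : ℝ × ℝ) : dot ξ w + dot ξ (w' - w) = dot ξ w' := by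
  simp only [dot, Prod.fst_sub, Prod.snd_sub]
  ring

theorem subdiff_edge_A1A2 (Fp Fm : ℝ) (hp : 0 < Fp) (hm : 2 * Fp < Fm)
    (w : ℝ × ℝ) (h1 : w.1 = 0) (h2 : 0 < w.2) :
    ∀ ξ : ℝ × ℝ,
      (∀ w' : ℝ × ℝ, Dsh Fp Fm w + dot ξ (w' - w) ≤ Dsh Fp Fm w') ↔
        ξ ∈ segment ℝ ((-Fp, Fp) : ℝ × ℝ) ((2 * Fp, Fp) : ℝ × ℝ) := by
  obtain ⟨w₁, s⟩ := w
  obtain rfl : w₁ = 0 := h1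
  have hs : 0 < s := h2
  have hm' : 2 * Fp ≤ Fm := hm.le
  have hDw := Dsh_zero_left hp.le hm' hs.le
  intro ξ
  rw [← Prod.image_mk_segment_left, segment_eq_Icc (by linarith)]
  constructor
  · intro h
    have up := h (0, 2 * s)
    have down := h (0, s / 2)
    have right := h (s, s)
    have left := h (-s, s)
    rw [Dsh_zero_left hp.le hm' (by linarith : 0 ≤ 2 * s)] at up
    rw [Dsh_zero_left hp.le hm' (by linarith : 0 ≤ s / 2)] at down
    rw [Dsh_diag hp.le hm' hs.le] at right
    rw [Dsh_antidiag hp.le hm' hs.le] at left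
    simp only [hDw, dot, Prod.mk_sub_mk] at up down right left
    have hξ₂ : ξ.2 = Fp := le_antisymm (by nlinarith) (by nlinarith)
    exact ⟨ξ.1, ⟨by nlinarith, by nlinarith⟩, Prod.ext rfl hξ₂.symm⟩
  · rintro ⟨t, ht, rfl⟩ w'
    have hDw' : Dsh Fp Fm (0, s) = dot (t, Fp) (0, s) := by simp [hDw, dot]
    rw [hDw', dot_add_dot_sub]
    exact dot_le_Dsh hm' ht w'
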